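/- Let n ≥ 2 and m ≥ 2 be integers and λ₁, …, λ_m > 0, and suppose the first n−1 agents of an n-agent Poisson-picking pool all choose process 1. For j ∈ {2,…,m} the expected payoff of agent n choosing process j is E_j = n·P₍>₎(λ_j,λ₁) + P₍=₎(λ_j,λ₁) − 1, and choosing process 1 gives payoff 0. Let i ∈ {2,…,m} satisfy λ_i ≥ λ_j for all j ∈ {2,…,m}. Then: (i) E_i ≥ E_j for every j ∈ {2,…,m}; (ii) if (n−1)·P₍>₎(λ_i,λ₁) ≥ P₍<₎(λ_i,λ₁) then E_i ≥ 0, so choosing process i is optimal for agent n; (iii) if (n−1)·P₍>₎(λ_i,λ₁) < P₍<₎(λ_i,λ₁) then E_j < 0 for every j ∈ {2,…,m}, so choosing process 1 is uniquely optimal for agent n. -/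

import Mathlib

/-- The Poisson probability mass function with rate `l`. -/
noncomputable def poissonPMF (l : ℝ) (i : ℕ) : ℝ :=
  Real.exp (-l) * l ^ i / (Nat.factorial i)

/-- Probability that the first of two independent Poisson counts (rates `l`, `m`)
strictly exceeds the second. -/
noncomputable def Pgt (l m : ℝ) : ℝ :=
  ∑' p : ℕ × ℕ, if p.2 < p.1 then poissonPMF l p.1 * poissonPMF m p.2 else 0

/-- Probability that the first of two independent Poisson counts (rates `l`, `m`)
is strictly less than the second. -/
noncomputable def Plt (l m : ℝ) : ℝ :=
  ∑' p : ℕ × ℕ, if p.1 < p.2 then poissonPMF l p.1 * poissonPMF m p.2 else 0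

/-- Probability that two independent Poisson counts (rates `l`, `m`) are equal. -/
noncomputable def Peq (l m : ℝ) : ℝ :=
  ∑' i : ℕ, poissonPMF l i * poissonPMF m i

lemma pois_nonneg {l : ℝ} (hl : 0 ≤ l) (i : ℕ) : 0 ≤ poissonPMF l i := by
  unfold poissonPMF; positivity

lemma pois_summable (l : ℝ) : Summable (poissonPMF l) := by
  have := (Real.summable_pow_div_factorial l).mul_left (Real.exp (-l))
  unfold poissonPMF
  simpa [mul_div_assoc] using this

lemma pois_tsum (l : ℝ) : ∑' i, poissonPMF l i = 1 := by
  have h : ∑' i : ℕ, l ^ i / (Nat.factorial i) = Real.exp l := by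
    rw [Real.exp_eq_exp_ℝ, NormedSpace.exp_eq_tsum_div]
  calc ∑' i, poissonPMF l i = ∑' i : ℕ, Real.exp (-l) * (l ^ i / (Nat.factorial i)) := by
        simp [poissonPMF, mul_div_assoc]
    _ = Real.exp (-l) * ∑' i : ℕ, (l ^ i / (Nat.factorial i)) := tsum_mul_left
    _ = 1 := by rw [h, ← Real.exp_add]; simp

/-- partial sum polynomial -/
noncomputable def Spoly (j : ℕ) (l : ℝ) : ℝ := ∑ i ∈ Finset.range j, l ^ i / (Nat.factorial i)

lemma hasDerivAt_Spoly (j : ℕ) (l : ℝ) : HasDerivAt (Spoly (j + 1)) (Spoly j l) l := by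
  induction j with
  | zero =>
    rw [show Spoly 1 = fun _ : ℝ => (1 : ℝ) from funext fun x => by simp [Spoly]]
    simpa [Spoly] using hasDerivAt_const l (1 : ℝ)
  | succ k ih =>
    have h1 : Spoly (k + 2) = fun x : ℝ => Spoly (k + 1) x + x ^ (k + 1) / (Nat.factorial (k + 1)) :=
      funext fun x => by simp [Spoly, Finset.sum_range_succ]
    rw [h1]
    have h2 : HasDerivAt (fun x : ℝ => x ^ (k + 1) / (Nat.factorial (k + 1))) (l ^ k / (Nat.factorial k)) l := by
      have := (hasDerivAt_pow (k + 1) l).div_const ((Nat.factorial (k + 1) : ℝ))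
      refine this.congr_deriv ?_
      have hk : (0:ℝ) < (Nat.factorial k : ℝ) := by positivity
      rw [Nat.factorial_succ]
      push_cast
      field_simp
    have h3 := ih.add h2
    refine h3.congr_deriv ?_
    simp [Spoly, Finset.sum_range_succ]

noncomputable def Fcdf (j : ℕ) (l : ℝ) : ℝ := Real.exp (-l) * Spoly j l

lemma Fcdf_eq (j : ℕ) (l : ℝ) : Fcdf j l = ∑ i ∈ Finset.range j, poissonPMF l i := by
  simp [Fcdf, Spoly, poissonPMF, Finset.mul_sum, mul_div_assoc]

lemma hasDerivAt_Fcdf (j : ℕ) (l : ℝ) :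
    HasDerivAt (Fcdf (j + 1)) (-(Real.exp (-l) * (l ^ j / (Nat.factorial j)))) l := by
  have he : HasDerivAt (fun x : ℝ => Real.exp (-x)) (-Real.exp (-l)) l := by
    simpa using (hasDerivAt_neg l).exp
  have h := he.mul (hasDerivAt_Spoly j l)
  have hsp : Spoly (j + 1) l = Spoly j l + l ^ j / (Nat.factorial j) := by
    simp [Spoly, Finset.sum_range_succ]
  refine h.congr_deriv ?_
  rw [hsp]; ring

lemma Fcdf_antitoneOn (j : ℕ) : AntitoneOn (Fcdf j) (Set.Ici (0 : ℝ)) := by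
  cases j with
  | zero =>
    intro a _ b _ _
    simp [Fcdf, Spoly]
  | succ k =>
    apply antitoneOn_of_deriv_nonpos (convex_Ici 0)
    · exact (Differentiable.continuous fun x => (hasDerivAt_Fcdf k x).differentiableAt).continuousOn
    · exact fun x _ => ((hasDerivAt_Fcdf k x).differentiableAt).differentiableWithinAt
    · intro x hx
      rw [interior_Ici] at hx
      rw [(hasDerivAt_Fcdf k x).deriv]
      have hx0 : (0:ℝ) ≤ x := le_of_lt hx
      have : (0:ℝ) ≤ Real.exp (-x) * (x ^ k / (Nat.factorial k)) :=
        mul_nonneg (Real.exp_nonneg _)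
          (div_nonneg (pow_nonneg hx0 _) (by positivity))
      linarith

lemma Fcdf_nonneg {l : ℝ} (hl : 0 ≤ l) (j : ℕ) : 0 ≤ Fcdf j l := by
  rw [Fcdf_eq]
  exact Finset.sum_nonneg fun i _ => pois_nonneg hl i

lemma Fcdf_le_one {l : ℝ} (hl : 0 ≤ l) (j : ℕ) : Fcdf j l ≤ 1 := by
  rw [Fcdf_eq, ← pois_tsum l]
  exact Summable.sum_le_tsum _ (fun i _ => pois_nonneg hl i) (pois_summable l)




section twovar
variable {l m : ℝ} (hl : 0 ≤ l) (hm : 0 ≤ m)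
include hl hm

lemma f2_summable : Summable (fun p : ℕ × ℕ => poissonPMF l p.1 * poissonPMF m p.2) :=
  (pois_summable l).mul_of_nonneg (pois_summable m)
    (fun i => pois_nonneg hl i) (fun i => pois_nonneg hm i)

lemma f2_tsum : ∑' p : ℕ × ℕ, poissonPMF l p.1 * poissonPMF m p.2 = 1 := by
  have h1 : ∀ b : ℕ, Summable fun c : ℕ => poissonPMF l b * poissonPMF m c :=
    fun b => (pois_summable m).mul_left _
  rw [Summable.tsum_prod' (f := fun p : ℕ × ℕ => poissonPMF l p.1 * poissonPMF m p.2)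
    (f2_summable hl hm) h1]
  have h2 : ∀ b : ℕ, (∑' c : ℕ, poissonPMF l b * poissonPMF m c) = poissonPMF l b := by
    intro b; rw [tsum_mul_left, pois_tsum, mul_one]
  calc (∑' (b : ℕ) (c : ℕ), poissonPMF l b * poissonPMF m c)
      = ∑' b : ℕ, poissonPMF l b := by congr 1; funext b; exact h2 b
    _ = 1 := pois_tsum l

lemma slice_summable (c : ℕ × ℕ → Prop) [DecidablePred c] :
    Summable (fun p : ℕ × ℕ => if c p then poissonPMF l p.1 * poissonPMF m p.2 else 0) := by
  apply Summable.of_nonneg_of_le _ _ (f2_summable hl hm)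
  · intro p
    split
    · exact mul_nonneg (pois_nonneg hl _) (pois_nonneg hm _)
    · exact le_rfl
  · intro p
    split
    · exact le_rfl
    · exact mul_nonneg (pois_nonneg hl _) (pois_nonneg hm _)

omit hl hm in
lemma Peq_eq_slice :
    Peq l m = ∑' p : ℕ × ℕ, if p.1 = p.2 then poissonPMF l p.1 * poissonPMF m p.2 else 0 := by
  have hinj : Function.Injective (fun i : ℕ => (i, i)) := by
    intro a b h; simpa using congrArg Prod.fst h
  have hsupp : Function.support
      (fun p : ℕ × ℕ => if p.1 = p.2 then poissonPMF l p.1 * poissonPMF m p.2 else 0)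
      ⊆ Set.range (fun i : ℕ => (i, i)) := by
    intro p hp
    by_cases h : p.1 = p.2
    · exact ⟨p.1, by rw [Prod.ext_iff]; exact ⟨rfl, h⟩⟩
    · simp [Function.mem_support, h] at hp
  have := Function.Injective.tsum_eq hinj hsupp
  rw [← this]
  simp [Peq]

lemma sum_three : Pgt l m + Plt l m + Peq l m = 1 := by
  rw [Peq_eq_slice]
  unfold Pgt Plt
  rw [← Summable.tsum_add (slice_summable hl hm _) (slice_summable hl hm _),
      ← Summable.tsum_add ((slice_summable hl hm (fun p => p.2 < p.1)).add
        (slice_summable hl hm (fun p => p.1 < p.2))) (slice_summable hl hm _)]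
  rw [← f2_tsum hl hm]
  congr 1
  funext p
  rcases lt_trichotomy p.1 p.2 with h | h | h
  · simp [h, not_lt_of_gt h, ne_of_lt h]
  · simp [h, lt_irrefl]
  · simp [h, not_lt_of_gt h, (ne_of_lt h).symm]
end twovar

lemma tsum_ite_lt_pois {l : ℝ} (j : ℕ) :
    ∑' i : ℕ, (if i < j then poissonPMF l i else 0) = Fcdf j l := by
  rw [tsum_eq_sum (s := Finset.range j) (fun b hb => by
    have : ¬ b < j := by simpa [Finset.mem_range] using hb
    simp [this])]
  rw [Fcdf_eq]
  exact Finset.sum_congr rfl fun i hi => by simp [Finset.mem_range.mp hi]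

lemma summable_ite_gt {l : ℝ} (hl : 0 ≤ l) (j : ℕ) :
    Summable (fun i : ℕ => if j < i then poissonPMF l i else 0) :=
  Summable.of_nonneg_of_le (fun i => by split; exacts [pois_nonneg hl i, le_rfl])
    (fun i => by split; exacts [le_rfl, pois_nonneg hl i]) (pois_summable l)

lemma tsum_ite_gt_pois {l : ℝ} (hl : 0 ≤ l) (j : ℕ) :
    ∑' i : ℕ, (if j < i then poissonPMF l i else 0) = 1 - Fcdf (j + 1) l := by
  set f := fun i : ℕ => if j < i then poissonPMF l i else 0 with hf
  have hsf : Summable f := summable_ite_gt hl j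
  have h1 := Summable.sum_add_tsum_nat_add (f := f) (j + 1) hsf
  have h2 := Summable.sum_add_tsum_nat_add (f := poissonPMF l) (j + 1) (pois_summable l)
  have e1 : ∑ i ∈ Finset.range (j + 1), f i = 0 := by
    apply Finset.sum_eq_zero; intro i hi
    have h3 : ¬ j < i := by have := Finset.mem_range.mp hi; omega
    simp [hf, h3]
  have e3 : ∑' i : ℕ, f (i + (j + 1)) = ∑' i : ℕ, poissonPMF l (i + (j + 1)) := by
    congr 1; funext i
    have h4 : j < i + (j + 1) := by omega
    simp [hf, h4]
  rw [pois_tsum] at h2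
  rw [e1, zero_add, e3] at h1
  rw [Fcdf_eq]
  linarith

lemma fiber_summable {l m : ℝ} (hl : 0 ≤ l) (hm : 0 ≤ m) (j : ℕ) (c : ℕ → Prop)
    [DecidablePred c] :
    Summable (fun i : ℕ => if c i then poissonPMF l i * poissonPMF m j else 0) := by
  apply Summable.of_nonneg_of_le _ _ ((pois_summable l).mul_right (poissonPMF m j))
  · intro i
    split
    · exact mul_nonneg (pois_nonneg hl _) (pois_nonneg hm _)
    · exact le_rfl
  · intro i
    split
    · exact le_rfl
    · exact mul_nonneg (pois_nonneg hl _) (pois_nonneg hm _)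

lemma Pgt_rep {l m : ℝ} (hl : 0 ≤ l) (hm : 0 ≤ m) :
    Pgt l m = ∑' j : ℕ, (1 - Fcdf (j + 1) l) * poissonPMF m j := by
  have hswap : Pgt l m
      = ∑' q : ℕ × ℕ, if q.1 < q.2 then poissonPMF l q.2 * poissonPMF m q.1 else 0 := by
    rw [Pgt, ← (Equiv.prodComm ℕ ℕ).tsum_eq
      (fun q : ℕ × ℕ => if q.2 < q.1 then poissonPMF l q.1 * poissonPMF m q.2 else 0)]
    rfl
  rw [hswap]
  have hs : Summable
      (fun q : ℕ × ℕ => if q.1 < q.2 then poissonPMF l q.2 * poissonPMF m q.1 else 0) := by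
    refine (slice_summable hm hl (fun p : ℕ × ℕ => p.1 < p.2)).congr fun q => ?_
    by_cases h : q.1 < q.2 <;> simp [h, mul_comm]
  have hfib : ∀ j : ℕ, Summable
      (fun i : ℕ => if j < i then poissonPMF l i * poissonPMF m j else 0) :=
    fun j => fiber_summable hl hm j _
  rw [Summable.tsum_prod' hs hfib]
  congr 1
  funext j
  calc (∑' i : ℕ, if j < i then poissonPMF l i * poissonPMF m j else 0)
      = ∑' i : ℕ, (if j < i then poissonPMF l i else 0) * poissonPMF m j := by
        congr 1; funext i; split <;> simp
    _ = (∑' i : ℕ, if j < i then poissonPMF l i else 0) * poissonPMF m j := tsum_mul_right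
    _ = (1 - Fcdf (j + 1) l) * poissonPMF m j := by rw [tsum_ite_gt_pois hl j]

lemma Plt_rep {l m : ℝ} (hl : 0 ≤ l) (hm : 0 ≤ m) :
    Plt l m = ∑' j : ℕ, Fcdf j l * poissonPMF m j := by
  have hswap : Plt l m
      = ∑' q : ℕ × ℕ, if q.2 < q.1 then poissonPMF l q.2 * poissonPMF m q.1 else 0 := by
    rw [Plt, ← (Equiv.prodComm ℕ ℕ).tsum_eq
      (fun q : ℕ × ℕ => if q.1 < q.2 then poissonPMF l q.1 * poissonPMF m q.2 else 0)]
    rfl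
  rw [hswap]
  have hs : Summable
      (fun q : ℕ × ℕ => if q.2 < q.1 then poissonPMF l q.2 * poissonPMF m q.1 else 0) := by
    refine (slice_summable hm hl (fun p : ℕ × ℕ => p.2 < p.1)).congr fun q => ?_
    by_cases h : q.2 < q.1 <;> simp [h, mul_comm]
  have hfib : ∀ j : ℕ, Summable
      (fun i : ℕ => if i < j then poissonPMF l i * poissonPMF m j else 0) :=
    fun j => fiber_summable hl hm j _
  rw [Summable.tsum_prod' hs hfib]
  congr 1
  funext j
  calc (∑' i : ℕ, if i < j then poissonPMF l i * poissonPMF m j else 0)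
      = ∑' i : ℕ, (if i < j then poissonPMF l i else 0) * poissonPMF m j := by
        congr 1; funext i; split <;> simp
    _ = (∑' i : ℕ, if i < j then poissonPMF l i else 0) * poissonPMF m j := tsum_mul_right
    _ = Fcdf j l * poissonPMF m j := by rw [tsum_ite_lt_pois j]

lemma summable_rep_gt {x m : ℝ} (hx : 0 ≤ x) (hm : 0 ≤ m) :
    Summable (fun j : ℕ => (1 - Fcdf (j + 1) x) * poissonPMF m j) := by
  apply Summable.of_nonneg_of_le _ _ (pois_summable m)
  · exact fun j => mul_nonneg (sub_nonneg.mpr (Fcdf_le_one hx _)) (pois_nonneg hm j)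
  · intro j
    nlinarith [Fcdf_nonneg hx (j + 1), pois_nonneg hm j, Fcdf_le_one hx (j + 1)]

lemma summable_rep_lt {x m : ℝ} (hx : 0 ≤ x) (hm : 0 ≤ m) :
    Summable (fun j : ℕ => Fcdf j x * poissonPMF m j) := by
  apply Summable.of_nonneg_of_le _ _ (pois_summable m)
  · exact fun j => mul_nonneg (Fcdf_nonneg hx j) (pois_nonneg hm j)
  · intro j
    nlinarith [Fcdf_nonneg hx j, pois_nonneg hm j, Fcdf_le_one hx j]

lemma Pgt_mono {l l' m : ℝ} (hl : 0 ≤ l) (hll : l ≤ l') (hm : 0 ≤ m) :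
    Pgt l m ≤ Pgt l' m := by
  have hl' : 0 ≤ l' := hl.trans hll
  rw [Pgt_rep hl hm, Pgt_rep hl' hm]
  apply Summable.tsum_le_tsum _ (summable_rep_gt hl hm) (summable_rep_gt hl' hm)
  intro j
  apply mul_le_mul_of_nonneg_right _ (pois_nonneg hm j)
  have := Fcdf_antitoneOn (j + 1) (Set.mem_Ici.mpr hl) (Set.mem_Ici.mpr hl') hll
  linarith

lemma Plt_anti {l l' m : ℝ} (hl : 0 ≤ l) (hll : l ≤ l') (hm : 0 ≤ m) :
    Plt l' m ≤ Plt l m := by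
  have hl' : 0 ≤ l' := hl.trans hll
  rw [Plt_rep hl hm, Plt_rep hl' hm]
  apply Summable.tsum_le_tsum _ (summable_rep_lt hl' hm) (summable_rep_lt hl hm)
  intro j
  exact mul_le_mul_of_nonneg_right
    (Fcdf_antitoneOn j (Set.mem_Ici.mpr hl) (Set.mem_Ici.mpr hl') hll) (pois_nonneg hm j)


/-- In an `n`-agent Poisson-picking pool with `m` processes (indexed by `Fin m`, with
index `0` playing the role of process 1) where the first `n − 1` agents all choose
process `0`: with `E j = n·P₍>₎(λ_j, λ_0) + P₍=₎(λ_j, λ_0) − 1` the expected payoff of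
agent `n` when choosing process `j ≠ 0` (choosing process `0` giving payoff 0), and
`i ≠ 0` a process of maximal rate among the processes other than `0`:
(i) `E i ≥ E j` for every `j ≠ 0`;
(ii) if `(n−1)·P₍>₎(λ_i, λ_0) ≥ P₍<₎(λ_i, λ_0)` then `E i ≥ 0`, so choosing process `i`
is optimal; (iii) if `(n−1)·P₍>₎(λ_i, λ_0) < P₍<₎(λ_i, λ_0)` then `E j < 0` for every
`j ≠ 0`, so choosing process `0` is uniquely optimal. -/
theorem poisson_pool_response_to_greedy_many_processes
    (n m : ℕ) [NeZero m] (hn : 2 ≤ n) (hm : 2 ≤ m)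
    (lam : Fin m → ℝ) (hlam : ∀ j, 0 < lam j)
    (E : Fin m → ℝ)
    (hE : ∀ j : Fin m, j ≠ 0 → E j = n * Pgt (lam j) (lam 0) + Peq (lam j) (lam 0) - 1)
    (i : Fin m) (hi : i ≠ 0) (himax : ∀ j : Fin m, j ≠ 0 → lam j ≤ lam i) :
    (∀ j : Fin m, j ≠ 0 → E j ≤ E i) ∧
    (((n : ℝ) - 1) * Pgt (lam i) (lam 0) ≥ Plt (lam i) (lam 0) → 0 ≤ E i) ∧
    (((n : ℝ) - 1) * Pgt (lam i) (lam 0) < Plt (lam i) (lam 0) →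
      ∀ j : Fin m, j ≠ 0 → E j < 0) := by
  have h0 : (0 : ℝ) ≤ lam 0 := (hlam 0).le
  have hn1 : (1 : ℝ) ≤ (n : ℝ) := by exact_mod_cast Nat.one_le_of_lt hn
  have key : ∀ j : Fin m, j ≠ 0 →
      E j = ((n : ℝ) - 1) * Pgt (lam j) (lam 0) - Plt (lam j) (lam 0) := by
    intro j hj
    have hs := sum_three (hlam j).le h0
    rw [hE j hj]
    linarith
  have part1 : ∀ j : Fin m, j ≠ 0 → E j ≤ E i := by
    intro j hj
    rw [key j hj, key i hi]
    have hg := Pgt_mono (hlam j).le (himax j hj) h0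
    have hl := Plt_anti (hlam j).le (himax j hj) h0
    have hmul : ((n : ℝ) - 1) * Pgt (lam j) (lam 0) ≤ ((n : ℝ) - 1) * Pgt (lam i) (lam 0) :=
      mul_le_mul_of_nonneg_left hg (by linarith)
    linarith
  refine ⟨part1, ?_, ?_⟩
  · intro h
    rw [key i hi]
    linarith
  · intro h j hj
    have h1 := part1 j hj
    have h2 : E i < 0 := by rw [key i hi]; linarith
    linarith
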